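/- arXiv:2112.10904 — 4 statements merged into one kernel-verified Lean document; each statement's English description precedes it below -/
import Mathlib

section
/- Let {P_{X|θ} : θ ∈ Θ} be a statistical model on a measurable sample space 𝕏, let 𝒜 be a collection of subsets of Θ containing all singletons {ϑ}, ϑ ∈ Θ, and let x ↦ Π̄_x be a valid inferential model on 𝒜. Then for every α ∈ [0,1] the set C_α(x) = {ϑ ∈ Θ : Π̄_x({ϑ}) > α} is a 100(1−α)% confidence region for θ, i.e., inf_{θ∈Θ} P_{X|θ}{x : θ ∈ C_α(x)} ≥ 1 − α. -/
open MeasureTheory Set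

/-- A valid IM yields 100(1−α)% confidence regions. -/
theorem stmt_1 {𝕏 Θ : Type*} [MeasurableSpace 𝕏]
    (P : Θ → Measure 𝕏) (hP : ∀ θ, IsProbabilityMeasure (P θ))
    (𝒜 : Set (Set Θ)) (hsing : ∀ ϑ : Θ, ({ϑ} : Set Θ) ∈ 𝒜)
    (Pl : 𝕏 → Set Θ → ℝ)
    (valid : ∀ α ∈ Icc (0:ℝ) 1, ∀ A ∈ 𝒜, ∀ θ ∈ A,
      P θ {x | Pl x A ≤ α} ≤ ENNReal.ofReal α)
    (α : ℝ) (hα : α ∈ Icc (0:ℝ) 1)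
    (C : 𝕏 → Set Θ) (hC : ∀ x, C x = {ϑ | Pl x {ϑ} > α}) :
    ∀ θ : Θ, ENNReal.ofReal (1 - α) ≤ P θ {x | θ ∈ C x} := by
  intro θ
  have hle := valid α hα {θ} (hsing θ) θ rfl
  have hset : {x | θ ∈ C x} = {x | Pl x {θ} ≤ α}ᶜ := by
    ext x
    simp [hC x, not_le]
  have hsub : (univ : Set 𝕏) ⊆ {x | Pl x {θ} ≤ α} ∪ {x | θ ∈ C x} := by
    intro x _
    rw [hset]
    exact (em _).imp id id
  have h1 : (1 : ENNReal) ≤ P θ {x | Pl x {θ} ≤ α} + P θ {x | θ ∈ C x} := by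
    calc (1 : ENNReal) = P θ univ := (measure_univ (μ := P θ)).symm
    _ ≤ P θ ({x | Pl x {θ} ≤ α} ∪ {x | θ ∈ C x}) := measure_mono hsub
    _ ≤ _ := measure_union_le _ _
  have : ENNReal.ofReal (1 - α) = 1 - ENNReal.ofReal α := by
    rw [ENNReal.ofReal_sub _ hα.1, ENNReal.ofReal_one]
  rw [this, tsub_le_iff_left]
  calc (1 : ENNReal) ≤ P θ {x | Pl x {θ} ≤ α} + P θ {x | θ ∈ C x} := h1
  _ ≤ ENNReal.ofReal α + P θ {x | θ ∈ C x} := by gcongr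
end

section
/- Let Θ be a set and 𝒜 a collection of subsets of Θ that is closed under complementation and contains all singletons. Let Π̄ : 𝒜 → [0,1] be monotone (A ⊆ A′ implies Π̄(A) ≤ Π̄(A′)) and define its dual Π̲(A) = 1 − Π̄(Aᶜ) for A ∈ 𝒜. Then for every α ∈ [0,1], the two sets {ϑ ∈ Θ : Π̄({ϑ}) > α} and ⋂{A ∈ 𝒜 : Π̲(A) ≥ 1 − α} are equal. -/
open Set

/-- The two expressions for the plausibility region coincide. -/
theorem stmt_2 {Θ : Type*} (𝒜 : Set (Set Θ))
    (hcompl : ∀ A ∈ 𝒜, Aᶜ ∈ 𝒜) (hsing : ∀ ϑ : Θ, ({ϑ} : Set Θ) ∈ 𝒜)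
    (Pl : Set Θ → ℝ) (hrange : ∀ A ∈ 𝒜, Pl A ∈ Icc (0:ℝ) 1)
    (hmono : ∀ A ∈ 𝒜, ∀ A' ∈ 𝒜, A ⊆ A' → Pl A ≤ Pl A')
    (Bl : Set Θ → ℝ) (hdual : ∀ A, Bl A = 1 - Pl Aᶜ)
    (α : ℝ) (hα : α ∈ Icc (0:ℝ) 1) :
    {ϑ : Θ | Pl {ϑ} > α} = ⋂₀ {A | A ∈ 𝒜 ∧ Bl A ≥ 1 - α} := by
  ext ϑ
  simp only [mem_setOf_eq, mem_sInter]
  constructor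
  · rintro h A ⟨hA, hBl⟩
    by_contra hϑ
    have hsub : ({ϑ} : Set Θ) ⊆ Aᶜ := by
      intro x hx; simp at hx; subst hx; exact hϑ
    have := hmono _ (hsing ϑ) _ (hcompl A hA) hsub
    rw [hdual] at hBl
    linarith
  · intro h
    by_contra hle
    push_neg at hle
    have hmem : ϑ ∈ ({ϑ}ᶜ : Set Θ) := by
      apply h
      refine ⟨hcompl _ (hsing ϑ), ?_⟩
      rw [hdual, compl_compl]
      linarith
    simp at hmem
end

section
/- (False Confidence Theorem.) Let {P_{X|θ} : θ ∈ ℝ^d} be a statistical model on a measurable sample space 𝕏, and let x ↦ Π_x be a Markov kernel assigning to each x ∈ 𝕏 a Borel probability measure Π_x on ℝ^d. Fix θ ∈ ℝ^d and suppose Π_x({θ}) = 0 for every x. Then for every α ∈ [0,1), and every g : [0,1] → [0,1] with g(α) > 0, there exists a Borel set A ⊆ ℝ^d with θ ∈ A such that P_{X|θ}{x : Π_x(A) ≤ g(α)} > α. In particular, A can be taken to be a closed Euclidean ball centered at θ of sufficiently small radius. -/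
open MeasureTheory Set Filter

/-- The False Confidence Theorem. -/
theorem stmt_4 {𝕏 : Type*} [MeasurableSpace 𝕏] (d : ℕ)
    (P : EuclideanSpace ℝ (Fin d) → Measure 𝕏)
    (hP : ∀ θ, IsProbabilityMeasure (P θ))
    (Pi : 𝕏 → Measure (EuclideanSpace ℝ (Fin d)))
    (hPi : ∀ x, IsProbabilityMeasure (Pi x))
    (hkernel : ∀ B : Set (EuclideanSpace ℝ (Fin d)), MeasurableSet B →
      Measurable fun x => Pi x B)
    (θ : EuclideanSpace ℝ (Fin d)) (hcont : ∀ x, Pi x {θ} = 0)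
    (α : ℝ) (hα : α ∈ Ico (0:ℝ) 1)
    (g : ℝ → ℝ) (hg : ∀ t ∈ Icc (0:ℝ) 1, g t ∈ Icc (0:ℝ) 1) (hgα : 0 < g α) :
    ∃ A : Set (EuclideanSpace ℝ (Fin d)), MeasurableSet A ∧ θ ∈ A ∧
      (∃ r > 0, A = Metric.closedBall θ r) ∧
      ENNReal.ofReal α < P θ {x | Pi x A ≤ ENNReal.ofReal (g α)} := by
  set B : ℕ → Set (EuclideanSpace ℝ (Fin d)) :=
    fun n => Metric.closedBall θ (1/(n+1:ℝ)) with hB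
  have hrpos : ∀ n : ℕ, (0:ℝ) < 1/(n+1:ℝ) := fun n => by positivity
  have hBanti : Antitone B := by
    intro n m hnm
    apply Metric.closedBall_subset_closedBall
    apply one_div_le_one_div_of_le (by positivity)
    have : (n:ℝ) ≤ m := Nat.cast_le.mpr hnm
    linarith
  have hBinter : (⋂ n, B n) = {θ} := by
    apply Subset.antisymm
    · intro y hy
      simp only [mem_iInter, hB, Metric.mem_closedBall] at hy
      simp only [mem_singleton_iff, ← dist_le_zero]
      by_contra h
      push_neg at h
      obtain ⟨n, hn⟩ := exists_nat_one_div_lt h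
      exact absurd (hy n) (not_le.mpr hn)
    · intro y hy
      simp only [mem_singleton_iff] at hy
      subst hy
      exact mem_iInter.mpr fun n => Metric.mem_closedBall_self (hrpos n).le
  set S : ℕ → Set 𝕏 := fun n => {x | Pi x (B n) ≤ ENNReal.ofReal (g α)} with hS
  have hSmeas : ∀ n, MeasurableSet (S n) :=
    fun n => measurableSet_le (hkernel _ measurableSet_closedBall) measurable_const
  have hSmono : Monotone S := fun n m hnm x hx =>
    le_trans (measure_mono (hBanti hnm)) hx
  have hSunion : (⋃ n, S n) = univ := by
    ext x
    simp only [mem_iUnion, mem_univ, iff_true]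
    have htend : Tendsto (fun n => Pi x (B n)) atTop (nhds (Pi x (⋂ n, B n))) :=
      tendsto_measure_iInter_atTop
        (fun n => measurableSet_closedBall.nullMeasurableSet) hBanti
        ⟨0, (measure_ne_top _ _)⟩
    rw [hBinter, hcont x] at htend
    have hev : ∀ᶠ n in atTop, Pi x (B n) < ENNReal.ofReal (g α) :=
      htend.eventually_lt_const (ENNReal.ofReal_pos.mpr hgα)
    obtain ⟨n, hn⟩ := hev.exists
    exact ⟨n, hn.le⟩
  have h1 : ENNReal.ofReal α < ⨆ n, P θ (S n) := by
    rw [← hSmono.measure_iUnion, hSunion, measure_univ]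
    calc ENNReal.ofReal α < ENNReal.ofReal 1 :=
      ENNReal.ofReal_lt_ofReal_iff_of_nonneg hα.1 |>.mpr hα.2
    _ = 1 := ENNReal.ofReal_one
  obtain ⟨n, hn⟩ := lt_iSup_iff.mp h1
  exact ⟨B n, measurableSet_closedBall,
    Metric.mem_closedBall_self (hrpos n).le, ⟨1/(n+1:ℝ), hrpos n, rfl⟩, hn⟩
end

section
/- Let {P_{X|θ} : θ ∈ Θ} be a statistical model on a measurable sample space 𝕏, and let f : 𝕏 × Θ → [0,1] be a function (a family of ϑ-specific plausibility contours evaluated at their own index, f(x,ϑ) = π_x(ϑ | ϑ)) such that P_{X|θ}{x : f(x, θ) ≤ α} ≤ α for every θ ∈ Θ and α ∈ [0,1], and such that sup_{ϑ∈Θ} f(x, ϑ) = 1 for every x. Then the fused plausibility measure Π̃_x(A) = sup_{ϑ∈A} f(x, ϑ) defines a valid inferential model: sup_{θ∈A} P_{X|θ}{x : Π̃_x(A) ≤ α} ≤ α for every α ∈ [0,1] and every A ⊆ Θ. -/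
open MeasureTheory Set

/-- Fusing pointwise-valid contours gives a valid IM. -/
theorem stmt_12 {𝕏 Θ : Type*} [MeasurableSpace 𝕏]
    (P : Θ → Measure 𝕏) (hP : ∀ θ, IsProbabilityMeasure (P θ))
    (f : 𝕏 → Θ → ℝ)
    (hvalid : ∀ θ, ∀ α ∈ Icc (0:ℝ) 1, P θ {x | f x θ ≤ α} ≤ ENNReal.ofReal α)
    (hsup : ∀ x, (⨆ ϑ, f x ϑ) = 1)
    (Pt : 𝕏 → Set Θ → ℝ) (hPt : ∀ x A, Pt x A = ⨆ ϑ ∈ A, f x ϑ) :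
    ∀ A : Set Θ, ∀ α ∈ Icc (0:ℝ) 1, ∀ θ ∈ A,
      P θ {x | Pt x A ≤ α} ≤ ENNReal.ofReal α := by
  intro A α hα θ hθ
  refine le_trans (measure_mono ?_) (hvalid θ α hα)
  intro x hx
  have hbdd : BddAbove (Set.range fun ϑ => f x ϑ) := by
    by_contra h
    have := Real.iSup_of_not_bddAbove h
    rw [hsup x] at this
    norm_num at this
  have hle : f x θ ≤ Pt x A := by
    rw [hPt]
    obtain ⟨M, hM⟩ := hbdd
    have hb : BddAbove (Set.range fun ϑ => ⨆ _ : ϑ ∈ A, f x ϑ) := by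
      refine ⟨max M 0, ?_⟩
      rintro y ⟨ϑ, rfl⟩
      by_cases h : ϑ ∈ A
      · simp only [h, ciSup_pos]
        exact le_max_of_le_left (hM ⟨ϑ, rfl⟩)
      · haveI : IsEmpty (ϑ ∈ A) := ⟨h⟩
        simp only [Real.iSup_of_isEmpty]
        exact le_max_right M 0
    calc f x θ = ⨆ _ : θ ∈ A, f x θ := (ciSup_pos (p := θ ∈ A) (f := fun _ => f x θ) hθ).symm
      _ ≤ ⨆ ϑ, ⨆ _ : ϑ ∈ A, f x ϑ := le_ciSup hb θ
  exact le_trans hle hx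
end
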